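/- If C is an optimal binary symmetric fix-free code with n codewords and sorted nondecreasing length sequence (l_1, l_2, …, l_n), then l_i ≤ n for every i ∈ {1,…,n} and Σ_{i=1}^n l_i ≤ n(n+1)/2. -/

import Mathlib

/-- A binary string is a `List Bool` (`false` = 0, `true` = 1).
A palindrome is a string equal to its own reversal. -/
def Palin (w : List Bool) : Prop := w.reverse = w

/-- A symmetric fix-free code: a finite set of binary palindromes in which
no element is a proper prefix of another. -/
def IsSFF (C : Finset (List Bool)) : Prop :=
  (∀ w ∈ C, Palin w) ∧ ∀ u ∈ C, ∀ w ∈ C, u <+: w → u = w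

/-- The sorted nondecreasing length sequence of a code. -/
def lenSeq (C : Finset (List Bool)) : List ℕ :=
  (C.val.map List.length).sort (· ≤ ·)

/-- The `i`-th entry (0-indexed) of the sorted length sequence. -/
def nthLen (C : Finset (List Bool)) (i : ℕ) : ℕ := (lenSeq C).getD i 0

/-- `p` is a probability vector with `p 0 ≥ p 1 ≥ ⋯ ≥ p (n-1) > 0`. -/
def IsProbVec (p : ℕ → ℝ) (n : ℕ) : Prop :=
  (∀ i j, i < n → j < n → i ≤ j → p j ≤ p i) ∧ (∀ i < n, 0 < p i) ∧
    ∑ i ∈ Finset.range n, p i = 1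

/-- Expected codeword length of `C` (via its sorted length sequence) under `p`. -/
noncomputable def expLen (p : ℕ → ℝ) (n : ℕ) (C : Finset (List Bool)) : ℝ :=
  ∑ i ∈ Finset.range n, p i * (nthLen C i : ℝ)

/-- `C` is an optimal symmetric fix-free code with `n` codewords: for some
nonincreasing probability vector, its expected length is minimal among all
symmetric fix-free codes with `n` codewords. -/
def IsOptimal (n : ℕ) (C : Finset (List Bool)) : Prop :=
  IsSFF C ∧ C.card = n ∧ ∃ p : ℕ → ℝ, IsProbVec p n ∧
    ∀ C' : Finset (List Bool), IsSFF C' → C'.card = n →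
      expLen p n C ≤ expLen p n C'

/-- Membership in `O_n`: optimal with `n` codewords and not containing the string `1`. -/
def InOpt (n : ℕ) (C : Finset (List Bool)) : Prop :=
  IsOptimal n C ∧ [true] ∉ C

/-- The root codeword `s i`: `s 1 = 0`, and `s i = 1 0^(i-2) 1` for `i ≥ 2`. -/
def rootWord (i : ℕ) : List Bool :=
  if i = 1 then [false] else true :: (List.replicate (i - 2) false ++ [true])

/-- The root code `R_n = {s_1, …, s_n}`. -/
def rootCode (n : ℕ) : Finset (List Bool) :=
  (Finset.Icc 1 n).image rootWord

/-- `N(σ)`: palindromes `w` such that `σ` is the longest palindrome that is a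
proper prefix of `w`. -/
def Nbhd (σ : List Bool) : Set (List Bool) :=
  {w | Palin w ∧ Palin σ ∧ σ <+: w ∧ σ ≠ w ∧
    ∀ u, Palin u → u <+: w → u ≠ w → u.length ≤ σ.length}

/-- `N_n(σ) = {w ∈ N(σ) : |w| ≤ n}`. -/
def NbhdN (n : ℕ) (σ : List Bool) : Set (List Bool) :=
  {w | w ∈ Nbhd σ ∧ w.length ≤ n}

/-- `S_n`: symmetric fix-free codes with `n` codewords, not containing `1`,
all of whose codewords have length at most `n`. -/
def SCodes (n : ℕ) : Set (Finset (List Bool)) :=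
  {C | IsSFF C ∧ C.card = n ∧ [true] ∉ C ∧ ∀ w ∈ C, w.length ≤ n}

/-- The relation `S →^σ T`: `σ ∈ S` and `T ⊆ (S ∪ N_n(σ)) \ {σ}`. -/
def ArrowTo (n : ℕ) (σ : List Bool) (S T : Finset (List Bool)) : Prop :=
  σ ∈ S ∧ ∀ w ∈ T, (w ∈ S ∨ w ∈ NbhdN n σ) ∧ w ≠ σ

/-- The relation `S ⇒^σ T`: `σ ∈ S`, `T ⊆ (S ∪ N_n(σ)) \ {σ}`, `|T| = n`, and
every omitted element of `(S ∪ N_n(σ)) \ {σ}` is at least as long as every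
element of `T` (so `T` consists of `n` shortest words of `(S ∪ N_n(σ)) \ {σ}`). -/
def StepTo (n : ℕ) (σ : List Bool) (S T : Finset (List Bool)) : Prop :=
  ArrowTo n σ S T ∧ T.card = n ∧
  ∀ w : List Bool, (w ∈ S ∨ w ∈ NbhdN n σ) → w ≠ σ → w ∉ T →
    ∀ v ∈ T, v.length ≤ w.length

/-- A `⇒`-transformation `R_n = S⁰ ⇒ S¹ ⇒ ⋯ ⇒ Sᵐ = C` of codes in `S_n`. -/
def IsTransform (n m : ℕ) (S : ℕ → Finset (List Bool)) (C : Finset (List Bool)) : Prop :=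
  S 0 = rootCode n ∧ S m = C ∧ (∀ i ≤ m, S i ∈ SCodes n) ∧
  ∀ i < m, ∃ σ, StepTo n σ (S i) (S (i + 1))

/-- A `⇒`-transformation with the witness `π i` used for the step `S i ⇒ S (i+1)`
(so `π 0, …, π (m-1)` are `π_1, …, π_m`). -/
def IsTransformW (n m : ℕ) (S : ℕ → Finset (List Bool)) (π : ℕ → List Bool)
    (C : Finset (List Bool)) : Prop :=
  S 0 = rootCode n ∧ S m = C ∧ (∀ i ≤ m, S i ∈ SCodes n) ∧
  ∀ i < m, StepTo n (π i) (S i) (S (i + 1))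

/-- `C^prefix`: palindromes other than `1` that are proper prefixes of some codeword of `C`. -/
def prefixSet (C : Finset (List Bool)) : Set (List Bool) :=
  {u | Palin u ∧ u ≠ [true] ∧ ∃ w ∈ C, u <+: w ∧ u ≠ w}

/-- Maximum codeword length of a code. -/
def maxLen (C : Finset (List Bool)) : ℕ := C.sup List.length

/-- Bitwise complement of a binary string. -/
def bcomp (w : List Bool) : List Bool := w.map (fun b => !b)

/-- `Dominates n l l'`: the sorted nondecreasing sequence `l` dominates `l'`,
i.e. `Σ_{j=1}^i l'_j ≥ Σ_{j=1}^i l_j` for every `i ∈ {1,…,n}`. -/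
def Dominates (n : ℕ) (l l' : ℕ → ℕ) : Prop :=
  ∀ i ≤ n, ∑ j ∈ Finset.range i, l j ≤ ∑ j ∈ Finset.range i, l' j

/-- Membership in `D_n`: codes in `S_n` whose length sequence is not dominated by
the length sequence of any code in `S_n` having a different length sequence. -/
def InD (n : ℕ) (S : Finset (List Bool)) : Prop :=
  S ∈ SCodes n ∧ ∀ C ∈ SCodes n, lenSeq C ≠ lenSeq S →
    ¬ Dominates n (nthLen C) (nthLen S)

/-!
If `C` contains the empty word or both one-bit words, all its codewords have length at most 1.
Otherwise some one-bit word `[b]` is missing from `C`, and every other nonempty palindrome has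
exactly one of the root words `!b, bb, b(!b)b, b(!b)(!b)b, …` (one of each length) as a prefix.
Keeping the `m` shortest codewords of `C` blocks at most `m` of the root words of lengths
`1, …, n`, so adding `n - m` unblocked ones yields a symmetric fix-free code `W` whose partial
length sums are those of `C` up to `m` and grow by at most `m + 1, …, i` afterwards. By Abel
summation against the nonincreasing probabilities, `W` would beat `C` if its partial sums were
dominated by those of `C` with a strictly smaller total. With `m = n - 1` this bounds the largest
length by `n`; with `m` maximal such that `l_1 + ⋯ + l_m ≤ 1 + ⋯ + m` it bounds the total by
`n (n + 1) / 2`.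
-/

open Finset

namespace List

theorem sum_range_getD_eq_sum_take {M : Type*} [AddCommMonoid M] (l : List M) (i : ℕ) :
    ∑ j ∈ Finset.range i, l.getD j 0 = (l.take i).sum := by
  induction i with
  | zero => simp
  | succ i ih =>
    rw [Finset.sum_range_succ, ih, take_add_one, sum_append]
    cases h : l[i]? <;> simp [getD_eq_getElem?_getD, h]

variable {α : Type*} [LinearOrder α] {l : List α} {d : α}

theorem Pairwise.lt_countP_le_getD (hl : l.Pairwise (· ≤ ·)) {j : ℕ} (hj : j < l.length) :
    j < l.countP (· ≤ l.getD j d) := by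
  induction l generalizing j with
  | nil => simp at hj
  | cons a t ih =>
    rw [pairwise_cons] at hl
    cases j with
    | zero => simp
    | succ j =>
      have hj' : j < t.length := by simpa using hj
      have ha : a ≤ t.getD j d := hl.1 _ (by simp [hj', getElem_mem])
      have := ih hl.2 hj'
      simp only [getD_cons_succ, countP_cons, ha, decide_true, if_true]
      omega

theorem Pairwise.getD_le_of_lt_countP (hl : l.Pairwise (· ≤ ·)) {x : α} {j : ℕ}
    (hj : j < l.countP (· ≤ x)) : l.getD j d ≤ x := by
  induction l generalizing j with
  | nil => simp at hj
  | cons a t ih =>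
    rw [pairwise_cons] at hl
    by_cases hax : a ≤ x
    · cases j with
      | zero => simpa using hax
      | succ j => exact ih hl.2 (by simpa [countP_cons, hax] using hj)
    · have : (a :: t).countP (· ≤ x) = 0 := by
        simp only [countP_eq_zero, mem_cons, decide_eq_true_eq]
        rintro y (rfl | hy)
        · exact hax
        · exact fun hyx => hax ((hl.1 y hy).trans hyx)
      omega

theorem exists_replicate_not_append_prefix {b : Bool} {t : List Bool} (h : b ∈ t) :
    ∃ k, replicate k (!b) ++ [b] <+: t := by
  induction t with
  | nil => simp at h
  | cons x t ih =>
    by_cases hx : x = b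
    · exact ⟨0, by simp [hx]⟩
    · obtain ⟨k, hk⟩ := ih (by simpa [Ne.symm hx] using h)
      refine ⟨k + 1, ?_⟩
      rw [replicate_succ, cons_append, cons_prefix_cons]
      exact ⟨by cases x <;> cases b <;> simp_all, hk⟩

end List

theorem Multiset.sort_getD_le_sort_getD_of_le {α : Type*} [LinearOrder α] {M N : Multiset α}
    (h : N ≤ M) (d : α) {j : ℕ} (hj : j < card N) :
    (M.sort (· ≤ ·)).getD j d ≤ (N.sort (· ≤ ·)).getD j d := by
  have hN := (pairwise_sort N (· ≤ ·)).lt_countP_le_getD (d := d) (j := j) (by simpa using hj)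
  generalize (N.sort (· ≤ ·)).getD j d = x at hN ⊢
  have hle := countP_le_of_le (· ≤ x) h
  rw [← sort_eq M (· ≤ ·), ← sort_eq N (· ≤ ·), coe_countP, coe_countP] at hle
  exact (pairwise_sort M (· ≤ ·)).getD_le_of_lt_countP (hN.trans_le hle)

theorem Finset.sum_range_add_one (n : ℕ) : ∑ k ∈ range n, (k + 1) = n * (n + 1) / 2 := by
  have := sum_range_id (n + 1)
  rwa [sum_range_succ', add_zero, Nat.add_sub_cancel, mul_comm] at this

theorem Finset.sum_add_one_add_sum_range_le {K : Finset ℕ} {N : ℕ} (hK : K ⊆ range N) :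
    ∑ k ∈ K, (k + 1) + ∑ k ∈ range (N - #K), (k + 1) ≤ ∑ k ∈ range N, (k + 1) := by
  induction N generalizing K with
  | zero => simp_all
  | succ N ih =>
    by_cases hN : N ∈ K
    · have hK' : K.erase N ⊆ range N := fun k hk => mem_range.2 <| lt_of_le_of_ne
        (Nat.lt_succ_iff.1 (mem_range.1 (hK (mem_of_mem_erase hk)))) (ne_of_mem_erase hk)
      have := ih hK'
      rw [card_erase_of_mem hN] at this
      rw [← add_sum_erase K _ hN, sum_range_succ]
      have hcard : #K ≤ N + 1 := by simpa using card_le_card hK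
      have hpos : 0 < #K := card_pos.2 ⟨N, hN⟩
      rw [show N + 1 - #K = N - (#K - 1) by omega]
      omega
    · have hK' : K ⊆ range N := fun k hk => mem_range.2 <| lt_of_le_of_ne
        (Nat.lt_succ_iff.1 (mem_range.1 (hK hk))) fun h => hN (h ▸ hk)
      have := ih hK'
      have hcard : #K ≤ N := by simpa using card_le_card hK'
      rw [show N + 1 - #K = N - #K + 1 by omega, sum_range_succ, sum_range_succ]
      omega

theorem sum_range_mul_pos_of_partial_sums {R : Type*} [CommRing R] [LinearOrder R]
    [IsStrictOrderedRing R] {p d : ℕ → R} {n : ℕ} (hp : AntitoneOn p (Set.Iio n))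
    (hpos : 0 < p (n - 1)) (hd : ∀ i ≤ n, 0 ≤ ∑ j ∈ range i, d j)
    (hdn : 0 < ∑ j ∈ range n, d j) : 0 < ∑ i ∈ range n, p i * d i := by
  have hn : n ≠ 0 := by rintro rfl; simp at hdn
  have hparts := sum_range_by_parts p d n
  simp only [smul_eq_mul] at hparts
  rw [hparts]
  have htail : ∑ i ∈ range (n - 1), (p (i + 1) - p i) * ∑ j ∈ range (i + 1), d j ≤ 0 := by
    refine sum_nonpos fun i hi => mul_nonpos_of_nonpos_of_nonneg ?_ (hd _ ?_)
    · have := mem_range.1 hi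
      exact sub_nonpos.2 (hp (by simp; omega) (by simp; omega) (by omega))
    · have := mem_range.1 hi
      omega
  have := mul_pos hpos hdn
  linarith

theorem IsSFF.subset {C D : Finset (List Bool)} (hC : IsSFF C) (hD : D ⊆ C) : IsSFF D :=
  ⟨fun w hw => hC.1 w (hD hw), fun u hu w hw => hC.2 u (hD hu) w (hD hw)⟩

theorem length_le_one_of_isSFF {C : Finset (List Bool)} (hC : IsSFF C)
    (h : [] ∈ C ∨ ([false] ∈ C ∧ [true] ∈ C)) {w : List Bool} (hw : w ∈ C) :
    w.length ≤ 1 := by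
  rcases w with _ | ⟨x, t⟩
  · simp
  · have hx : [x] ∈ C ∨ [] ∈ C := by cases x <;> tauto
    rcases hx with hx | hx <;> simp [← hC.2 _ hx _ hw (by simp)]

section LengthSequence

variable {C S W : Finset (List Bool)}

theorem coe_lenSeq (C : Finset (List Bool)) : (lenSeq C : Multiset ℕ) = C.val.map List.length :=
  Multiset.sort_eq _ _

theorem length_lenSeq (C : Finset (List Bool)) : (lenSeq C).length = #C := by
  simp [lenSeq]

theorem sum_range_nthLen (C : Finset (List Bool)) (i : ℕ) :
    ∑ j ∈ range i, nthLen C j = ((lenSeq C).take i).sum :=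
  List.sum_range_getD_eq_sum_take _ _

theorem sum_range_card_nthLen (C : Finset (List Bool)) :
    ∑ j ∈ range #C, nthLen C j = ∑ w ∈ C, w.length := by
  rw [sum_range_nthLen, ← length_lenSeq, List.take_length, ← Multiset.sum_coe, coe_lenSeq]
  rfl

theorem nthLen_mono {i j : ℕ} (hij : i ≤ j) (hj : j < #C) : nthLen C i ≤ nthLen C j := by
  rw [← length_lenSeq] at hj
  simp only [nthLen, List.getD_eq_getElem _ _ hj, List.getD_eq_getElem _ _ (hij.trans_lt hj)]
  exact (Multiset.pairwise_sort _ _).rel_get_of_le (a := ⟨i, _⟩) (b := ⟨j, hj⟩) hij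

theorem nthLen_le_of_forall_length_le {K : ℕ} (h : ∀ w ∈ C, w.length ≤ K) (i : ℕ) :
    nthLen C i ≤ K := by
  rw [nthLen, List.getD_eq_getElem?_getD]
  cases hi : (lenSeq C)[i]? with
  | none => simp
  | some x =>
    have hx : x ∈ C.val.map List.length := by
      rw [← coe_lenSeq, Multiset.mem_coe]
      exact List.mem_of_getElem? hi
    obtain ⟨w, hw, rfl⟩ := Multiset.mem_map.1 hx
    exact h w hw

theorem nthLen_le_nthLen_of_subset (h : S ⊆ W) {j : ℕ} (hj : j < #S) :
    nthLen W j ≤ nthLen S j :=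
  Multiset.sort_getD_le_sort_getD_of_le (Multiset.map_le_map (val_le_iff.2 h)) 0
    (by simpa using hj)

theorem sum_range_nthLen_le_of_subset (h : S ⊆ W) :
    ∑ j ∈ range #S, nthLen W j ≤ ∑ w ∈ S, w.length := by
  rw [← sum_range_card_nthLen]
  exact sum_le_sum fun j hj => nthLen_le_nthLen_of_subset h (mem_range.1 hj)

noncomputable def byLength (C : Finset (List Bool)) : List (List Bool) :=
  C.toList.mergeSort fun u w => u.length ≤ w.length

theorem map_length_byLength (C : Finset (List Bool)) :
    (byLength C).map List.length = lenSeq C := by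
  rw [byLength, List.map_mergeSort (s := fun a b => decide (a ≤ b)) (by simp), lenSeq,
    ← coe_toList, Multiset.map_coe, Multiset.coe_sort]

theorem nodup_byLength (C : Finset (List Bool)) : (byLength C).Nodup :=
  (List.mergeSort_perm _ _).nodup_iff.2 C.nodup_toList

theorem mem_byLength {w : List Bool} : w ∈ byLength C ↔ w ∈ C := by
  rw [byLength, (List.mergeSort_perm _ _).mem_iff, mem_toList]

noncomputable def shortest (C : Finset (List Bool)) (i : ℕ) : Finset (List Bool) :=
  ((byLength C).take i).toFinset

theorem shortest_subset (C : Finset (List Bool)) (i : ℕ) : shortest C i ⊆ C := fun _ hw =>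
  mem_byLength.1 (List.mem_of_mem_take (List.mem_toFinset.1 hw))

theorem shortest_mono {i m : ℕ} (h : i ≤ m) : shortest C i ⊆ shortest C m := by
  intro w hw
  simp only [shortest, List.mem_toFinset] at hw ⊢
  exact (List.take_prefix_take_left h).subset hw

theorem card_shortest {i : ℕ} (hi : i ≤ #C) : #(shortest C i) = i := by
  rw [shortest, List.toFinset_card_of_nodup ((nodup_byLength C).sublist (List.take_sublist _ _)),
    List.length_take]
  have : (byLength C).length = #C := by
    rw [← length_lenSeq, ← map_length_byLength, List.length_map]
  omega

theorem sum_length_shortest (C : Finset (List Bool)) (i : ℕ) :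
    ∑ w ∈ shortest C i, w.length = ∑ j ∈ range i, nthLen C j := by
  rw [shortest, List.sum_toFinset _ ((nodup_byLength C).sublist (List.take_sublist _ _))]
  change (List.map List.length _).sum = _
  rw [List.map_take, map_length_byLength, sum_range_nthLen]

end LengthSequence

section RootWords

variable {b : Bool}

/-- The paper's root words, indexed from `0` and with the roles of the bits swappable:
`rootWordOf true k = rootWord (k + 1)`. -/
def rootWordOf (b : Bool) : ℕ → List Bool
  | 0 => [!b]
  | k + 1 => b :: (List.replicate k (!b) ++ [b])

theorem length_rootWordOf (b : Bool) (k : ℕ) : (rootWordOf b k).length = k + 1 := by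
  cases k <;> simp [rootWordOf]

theorem palin_rootWordOf (b : Bool) (k : ℕ) : Palin (rootWordOf b k) := by
  cases k <;> simp [rootWordOf, Palin]

theorem eq_of_rootWordOf_prefix {i j : ℕ} (h : rootWordOf b i <+: rootWordOf b j) : i = j := by
  have hl := h.length_le
  simp only [length_rootWordOf] at hl
  cases i with
  | zero =>
    cases j with
    | zero => rfl
    | succ j => simp [rootWordOf] at h
  | succ i =>
    cases j with
    | zero => omega
    | succ j =>
      have := h.getElem (i := i + 1) (by simp [length_rootWordOf])
      simp [rootWordOf, List.getElem_append] at this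
      omega

theorem eq_of_rootWordOf_prefix_of_prefix {i j : ℕ} {w : List Bool}
    (hi : rootWordOf b i <+: w) (hj : rootWordOf b j <+: w) : i = j := by
  rcases le_total i j with h | h
  · exact eq_of_rootWordOf_prefix
      (List.prefix_of_prefix_length_le hi hj (by simp [length_rootWordOf, h]))
  · exact (eq_of_rootWordOf_prefix
      (List.prefix_of_prefix_length_le hj hi (by simp [length_rootWordOf, h]))).symm

theorem exists_rootWordOf_prefix {w : List Bool} (hw : Palin w) (hnil : w ≠ []) (hb : w ≠ [b]) :
    ∃ k, rootWordOf b k <+: w := by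
  obtain ⟨x, t, rfl⟩ := List.exists_cons_of_ne_nil hnil
  by_cases hx : x = b
  · subst hx
    obtain ⟨k, hk⟩ : ∃ k, List.replicate k (!x) ++ [x] <+: t := by
      refine List.exists_replicate_not_append_prefix ?_
      rcases List.eq_nil_or_concat t with rfl | ⟨s, y, rfl⟩
      · exact absurd rfl hb
      · have hyx := congrArg List.head? hw
        simp only [List.concat_eq_append, List.reverse_cons, List.reverse_append] at hyx
        simp_all
    exact ⟨k + 1, List.cons_prefix_cons.2 ⟨rfl, hk⟩⟩
  · refine ⟨0, List.cons_prefix_cons.2 ⟨?_, List.nil_prefix⟩⟩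
    revert hx
    cases x <;> cases b <;> decide

theorem rootWordOf_injective (b : Bool) : Function.Injective (rootWordOf b) := fun i j h => by
  simpa [length_rootWordOf] using congrArg List.length h

theorem card_filter_rootWordOf_prefix_le (D : Finset (List Bool)) (s : Finset ℕ) :
    #(s.filter fun k => ∃ w ∈ D, rootWordOf b k <+: w) ≤ #D := calc
  _ ≤ #(D.biUnion fun w => s.filter (rootWordOf b · <+: w)) :=
    card_le_card fun k hk => by simp_all
  _ ≤ #D * 1 := card_biUnion_le_card_mul _ _ _ fun w _ => card_le_one.2 fun i hi j hj =>
    eq_of_rootWordOf_prefix_of_prefix (mem_filter.1 hi).2 (mem_filter.1 hj).2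
  _ = #D := mul_one _

theorem exists_isSFF_union_image_rootWordOf {D : Finset (List Bool)} (hD : IsSFF D)
    (hnil : [] ∉ D) (hb : [b] ∉ D) {n : ℕ} (hn : #D ≤ n) :
    ∃ J ⊆ range n, #J = n - #D ∧ Disjoint D (J.image (rootWordOf b)) ∧
      IsSFF (D ∪ J.image (rootWordOf b)) := by
  classical
  set F := (range n).filter fun k => ∃ w ∈ D, rootWordOf b k <+: w
  have hF : #F ≤ #D := card_filter_rootWordOf_prefix_le D (range n)
  obtain ⟨J, hJF, hJ⟩ := exists_subset_card_eq (s := range n \ F) (n := n - #D) (by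
    have := le_card_sdiff F (range n)
    rw [card_range] at this
    omega)
  have hfree : ∀ j ∈ J, ∀ w ∈ D, ¬ rootWordOf b j <+: w := fun j hj w hw hjw =>
    (mem_sdiff.1 (hJF hj)).2 (mem_filter.2 ⟨(mem_sdiff.1 (hJF hj)).1, w, hw, hjw⟩)
  refine ⟨J, hJF.trans sdiff_subset, hJ, ?_, ?_, ?_⟩
  · rw [disjoint_right]
    rintro _ hw hwD
    obtain ⟨j, hj, rfl⟩ := mem_image.1 hw
    exact hfree j hj _ hwD List.prefix_rfl
  · intro w hw
    rcases mem_union.1 hw with hw | hw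
    · exact hD.1 w hw
    · obtain ⟨j, -, rfl⟩ := mem_image.1 hw
      exact palin_rootWordOf b j
  · intro u hu w hw huw
    rcases mem_union.1 hu with hu | hu <;> rcases mem_union.1 hw with hw | hw
    · exact hD.2 u hu w hw huw
    · obtain ⟨j, hj, rfl⟩ := mem_image.1 hw
      obtain ⟨k, hk⟩ := exists_rootWordOf_prefix (hD.1 u hu) (ne_of_mem_of_not_mem hu hnil)
        (ne_of_mem_of_not_mem hu hb)
      obtain rfl := eq_of_rootWordOf_prefix (hk.trans huw)
      exact (hfree k hj u hu hk).elim
    · obtain ⟨i, hi, rfl⟩ := mem_image.1 hu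
      exact (hfree i hi w hw huw).elim
    · obtain ⟨i, -, rfl⟩ := mem_image.1 hu
      obtain ⟨j, -, rfl⟩ := mem_image.1 hw
      rw [eq_of_rootWordOf_prefix huw]

end RootWords

theorem sum_range_nthLen_union_image_rootWordOf_le {D : Finset (List Bool)} {J : Finset ℕ}
    {b : Bool} {n i : ℕ} (hJn : J ⊆ range n) (hJ : #J = n - #D)
    (hdisj : Disjoint D (J.image (rootWordOf b))) (hDi : #D ≤ i) (hin : i ≤ n) :
    ∑ j ∈ range i, nthLen (D ∪ J.image (rootWordOf b)) j + ∑ k ∈ range #D, (k + 1) ≤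
      ∑ w ∈ D, w.length + ∑ k ∈ range i, (k + 1) := by
  classical
  obtain ⟨K, hKJ, hK⟩ := exists_subset_card_eq (s := J ∩ range i) (n := i - #D) (by
    have hout : #(J \ range i) ≤ n - i := calc
      #(J \ range i) ≤ #(range n \ range i) := card_le_card (sdiff_subset_sdiff hJn le_rfl)
      _ = n - i := by rw [card_sdiff_of_subset (range_subset_range.2 hin), card_range, card_range]
    have := card_sdiff_add_card_inter J (range i)
    omega)
  have hKJ' : K.image (rootWordOf b) ⊆ J.image (rootWordOf b) :=
    image_subset_image (hKJ.trans inter_subset_left)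
  have hdisjK := hdisj.mono_right hKJ'
  have hcard : #(D ∪ K.image (rootWordOf b)) = i := by
    rw [card_union_of_disjoint hdisjK, card_image_of_injective _ (rootWordOf_injective b), hK]
    omega
  have hsum : ∑ w ∈ D ∪ K.image (rootWordOf b), w.length =
      ∑ w ∈ D, w.length + ∑ k ∈ K, (k + 1) := by
    rw [sum_union hdisjK, sum_image (rootWordOf_injective b).injOn]
    simp only [length_rootWordOf]
  have hK_le := sum_add_one_add_sum_range_le (hKJ.trans inter_subset_right)
  rw [hK, show i - (i - #D) = #D by omega] at hK_le
  have hW_le := sum_range_nthLen_le_of_subset (union_subset_union_right hKJ' (s := D))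
  rw [hcard, hsum] at hW_le
  omega

theorem exists_isSFF_sum_nthLen_le {C : Finset (List Bool)} (hC : IsSFF C) {b : Bool}
    (hnil : [] ∉ C) (hb : [b] ∉ C) {m : ℕ} (hm : m ≤ #C) :
    ∃ W, IsSFF W ∧ #W = #C ∧
      (∀ i ≤ m, ∑ j ∈ range i, nthLen W j ≤ ∑ j ∈ range i, nthLen C j) ∧
      ∀ i, m ≤ i → i ≤ #C → ∑ j ∈ range i, nthLen W j + ∑ k ∈ range m, (k + 1) ≤
        ∑ j ∈ range m, nthLen C j + ∑ k ∈ range i, (k + 1) := by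
  classical
  have hDC := shortest_subset C m
  have hDm : #(shortest C m) = m := card_shortest hm
  obtain ⟨J, hJn, hJ, hdisj, hW⟩ := exists_isSFF_union_image_rootWordOf (hC.subset hDC)
    (fun h => hnil (hDC h)) (fun h => hb (hDC h)) (card_le_card hDC)
  refine ⟨shortest C m ∪ J.image (rootWordOf b), hW, ?_, fun i hi => ?_, fun i hmi hiC => ?_⟩
  · rw [card_union_of_disjoint hdisj, card_image_of_injective _ (rootWordOf_injective b), hJ,
      hDm]
    omega
  · have := sum_range_nthLen_le_of_subset (W := shortest C m ∪ J.image (rootWordOf b))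
      ((shortest_mono (C := C) hi).trans subset_union_left)
    rwa [card_shortest (hi.trans hm), sum_length_shortest] at this
  · have := sum_range_nthLen_union_image_rootWordOf_le hJn hJ hdisj (hDm.symm ▸ hmi) hiC
    rwa [hDm, sum_length_shortest] at this

theorem IsOptimal.sum_nthLen_le_of_forall_le {n : ℕ} {C W : Finset (List Bool)}
    (h : IsOptimal n C) (hW : IsSFF W) (hWn : #W = n)
    (hdom : ∀ i ≤ n, ∑ j ∈ range i, nthLen W j ≤ ∑ j ∈ range i, nthLen C j) :
    ∑ j ∈ range n, nthLen C j ≤ ∑ j ∈ range n, nthLen W j := by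
  obtain ⟨-, -, p, ⟨hanti, hpos, -⟩, hopt⟩ := h
  by_contra! hlt
  have hn : n ≠ 0 := by
    rintro rfl
    simp at hlt
  have hgain : 0 < ∑ i ∈ range n, p i * ((nthLen C i : ℝ) - nthLen W i) := by
    refine sum_range_mul_pos_of_partial_sums (fun i hi j hj hij => hanti i j hi hj hij)
      (hpos _ (by omega)) (fun i hi => ?_) ?_
    · simpa [sum_sub_distrib] using (Nat.cast_le (α := ℝ)).2 (hdom i hi)
    · simpa [sum_sub_distrib] using (Nat.cast_lt (α := ℝ)).2 hlt
  have := hopt W hW hWn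
  simp only [expLen, mul_sub, sum_sub_distrib] at hgain this
  linarith

theorem IsOptimal.sum_nthLen_add_le {n : ℕ} {C : Finset (List Bool)} (h : IsOptimal n C)
    {b : Bool} (hnil : [] ∉ C) (hb : [b] ∉ C) {m : ℕ} (hm : m ≤ n)
    (hgrow : ∀ i, m < i → i ≤ n →
      ∑ j ∈ range m, nthLen C j + ∑ k ∈ range i, (k + 1) ≤
        ∑ k ∈ range m, (k + 1) + ∑ j ∈ range i, nthLen C j) :
    ∑ j ∈ range n, nthLen C j + ∑ k ∈ range m, (k + 1) ≤
      ∑ j ∈ range m, nthLen C j + ∑ k ∈ range n, (k + 1) := by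
  obtain ⟨W, hW, hWn, hlow, hhigh⟩ := exists_isSFF_sum_nthLen_le h.1 hnil hb (h.2.1 ▸ hm)
  rw [h.2.1] at hWn hhigh
  have hCW := h.sum_nthLen_le_of_forall_le hW hWn fun i hi => by
    rcases le_or_gt i m with him | hmi
    · exact hlow i him
    · have := hhigh i hmi.le hi
      have := hgrow i hmi hi
      omega
  have := hhigh n hm le_rfl
  omega

theorem IsOptimal.nthLen_le {n : ℕ} {C : Finset (List Bool)} (h : IsOptimal n C) {b : Bool}
    (hnil : [] ∉ C) (hb : [b] ∉ C) {i : ℕ} (hi : i < n) : nthLen C i ≤ n := by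
  obtain ⟨k, rfl⟩ : ∃ k, n = k + 1 := ⟨n - 1, by omega⟩
  have hlast : nthLen C k ≤ k + 1 := by
    by_contra! hlt
    have := h.sum_nthLen_add_le hnil hb k.le_succ fun i hki hik => by
      obtain rfl : i = k + 1 := by omega
      rw [sum_range_succ, sum_range_succ]
      omega
    rw [sum_range_succ, sum_range_succ] at this
    omega
  exact (nthLen_mono (by omega) (by rw [h.2.1]; omega)).trans hlast

theorem IsOptimal.sum_nthLen_le {n : ℕ} {C : Finset (List Bool)} (h : IsOptimal n C) {b : Bool}
    (hnil : [] ∉ C) (hb : [b] ∉ C) :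
    ∑ j ∈ range n, nthLen C j ≤ ∑ k ∈ range n, (k + 1) := by
  obtain ⟨m, hmn, hm, hgreat⟩ : ∃ m ≤ n,
      ∑ j ∈ range m, nthLen C j ≤ ∑ k ∈ range m, (k + 1) ∧
      ∀ i, m < i → i ≤ n → ∑ k ∈ range i, (k + 1) < ∑ j ∈ range i, nthLen C j :=
    let P i := ∑ j ∈ range i, nthLen C j ≤ ∑ k ∈ range i, (k + 1)
    ⟨_, Nat.findGreatest_le n, Nat.findGreatest_spec (P := P) (Nat.zero_le n) (by simp [P]),
      fun i hmi hin => not_le.1 (Nat.findGreatest_is_greatest (P := P) hmi hin)⟩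
  have := h.sum_nthLen_add_le hnil hb hmn fun i hmi hin => by
    have := hgreat i hmi hin
    omega
  omega

/-- If `C` is an optimal binary symmetric fix-free code with `n`
codewords and sorted nondecreasing length sequence `(l_1, …, l_n)`, then
`l_i ≤ n` for every `i` and `Σ_i l_i ≤ n(n+1)/2`. -/
theorem optimal_length_bounds (n : ℕ) (C : Finset (List Bool)) (h : IsOptimal n C) :
    (∀ i < n, nthLen C i ≤ n) ∧
      ∑ i ∈ Finset.range n, nthLen C i ≤ n * (n + 1) / 2 := by
  rw [← sum_range_add_one]
  by_cases hdeg : ∃ b, [] ∉ C ∧ [b] ∉ C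
  · obtain ⟨b, hnil, hb⟩ := hdeg
    exact ⟨fun i => h.nthLen_le hnil hb, h.sum_nthLen_le hnil hb⟩
  · simp only [not_exists, not_and, not_not] at hdeg
    have hle : ∀ w ∈ C, w.length ≤ 1 := fun w => length_le_one_of_isSFF h.1
      (or_iff_not_imp_left.2 fun hnil => ⟨hdeg false hnil, hdeg true hnil⟩)
    exact ⟨fun i hi => (nthLen_le_of_forall_length_le hle i).trans (by omega),
      sum_le_sum fun i _ => (nthLen_le_of_forall_length_le hle i).trans (by omega)⟩
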